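/- arXiv:1305.6675 — 3 statements merged into one kernel-verified Lean document; each statement's English description precedes it below -/
import Mathlib

section
/- Suppose u, v are C¹ real functions on an open neighborhood of (1,0) in ℝ² satisfying the Cauchy–Riemann equations and u² + v² = 1/x. Then at every point of the neighborhood, ∂u/∂x = −u/(2x) and ∂v/∂x = −v/(2x). -/
/-!
Differentiating `u² + v² = 1/x` in `x` and in `y` gives `2(u u_x + v v_x) = -1/x²` and
`2(u u_y + v v_y) = 0`. The Cauchy–Riemann equations turn the second into `v u_x - u v_x = 0`,
so `(u_x, v_x)` solves a linear system whose determinant `-(u² + v²) = -1/x` never vanishes.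
-/

open Filter Topology

theorem eq_mul_div_of_mul_add_mul_eq_of_mul_sub_mul_eq_zero {K : Type*} [Field K]
    {u v a b r : K} (hN : u ^ 2 + v ^ 2 ≠ 0) (h₁ : u * a + v * b = r) (h₂ : v * a - u * b = 0) :
    a = u * r / (u ^ 2 + v ^ 2) ∧ b = v * r / (u ^ 2 + v ^ 2) := by
  constructor <;> rw [eq_div_iff hN, ← h₁]
  · linear_combination v * h₂
  · linear_combination -u * h₂

variable {𝕜 : Type*} [NontriviallyNormedField 𝕜]

theorem HasDerivAt.two_mul_add_eq_of_sq_add_sq_eventuallyEq {f g h : 𝕜 → 𝕜} {f' g' h' x : 𝕜}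
    (hf : HasDerivAt f f' x) (hg : HasDerivAt g g' x) (hh : HasDerivAt h h' x)
    (hfg : (fun t => f t ^ 2 + g t ^ 2) =ᶠ[𝓝 x] h) :
    2 * (f x * f' + g x * g') = h' := by
  have hsum : HasDerivAt (fun t => f t ^ 2 + g t ^ 2) (2 * (f x * f' + g x * g')) x :=
    ((hf.pow 2).add (hg.pow 2)).congr_deriv (by push_cast; ring)
  exact (hsum.congr_of_eventuallyEq hfg.symm).unique hh

theorem DifferentiableAt.hasDerivAt_deriv_slice_left {F : Type*} [NormedAddCommGroup F]
    [NormedSpace 𝕜 F] {f : 𝕜 × F → 𝕜} {p : 𝕜 × F} (hf : DifferentiableAt 𝕜 f p) :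
    HasDerivAt (fun x => f (x, p.2)) (deriv (fun x => f (x, p.2)) p.1) p.1 :=
  (hf.comp p.1 (differentiableAt_id.prodMk (differentiableAt_const _))).hasDerivAt

theorem DifferentiableAt.hasDerivAt_deriv_slice_right {E : Type*} [NormedAddCommGroup E]
    [NormedSpace 𝕜 E] {f : E × 𝕜 → 𝕜} {p : E × 𝕜} (hf : DifferentiableAt 𝕜 f p) :
    HasDerivAt (fun y => f (p.1, y)) (deriv (fun y => f (p.1, y)) p.2) p.2 :=
  (hf.comp p.2 ((differentiableAt_const _).prodMk differentiableAt_id)).hasDerivAt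

theorem eventually_nhds_slice_left {X Y : Type*} [TopologicalSpace X] [TopologicalSpace Y]
    {P : X × Y → Prop} {p : X × Y} (hP : ∀ᶠ q in 𝓝 p, P q) : ∀ᶠ x in 𝓝 p.1, P (x, p.2) :=
  (continuous_id.prodMk continuous_const).continuousAt.eventually hP

theorem eventually_nhds_slice_right {X Y : Type*} [TopologicalSpace X] [TopologicalSpace Y]
    {P : X × Y → Prop} {p : X × Y} (hP : ∀ᶠ q in 𝓝 p, P q) : ∀ᶠ y in 𝓝 p.2, P (p.1, y) :=
  (continuous_const.prodMk continuous_id).continuousAt.eventually hP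

theorem x_derivatives_from_CR_and_constraint_general
    (W : Set (ℝ × ℝ)) (u v : ℝ × ℝ → ℝ)
    (hW : IsOpen W)
    (hu : ContDiffOn ℝ 1 u W) (hv : ContDiffOn ℝ 1 v W)
    (hx : ∀ p ∈ W, 0 < p.1)
    (hCR : ∀ p ∈ W,
      deriv (fun x => u (x, p.2)) p.1 = deriv (fun y => v (p.1, y)) p.2 ∧
      deriv (fun y => u (p.1, y)) p.2 = - deriv (fun x => v (x, p.2)) p.1)
    (hcon : ∀ p ∈ W, u p ^ 2 + v p ^ 2 = 1 / p.1) :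
    ∀ p ∈ W,
      deriv (fun x => u (x, p.2)) p.1 = - u p / (2 * p.1) ∧
      deriv (fun x => v (x, p.2)) p.1 = - v p / (2 * p.1) := by
  intro p hp
  have hW_nhds : W ∈ 𝓝 p := hW.mem_nhds hp
  have hdu := (hu.contDiffAt hW_nhds).differentiableAt one_ne_zero
  have hdv := (hv.contDiffAt hW_nhds).differentiableAt one_ne_zero
  have hcon_nhds : ∀ᶠ q in 𝓝 p, u q ^ 2 + v q ^ 2 = 1 / q.1 :=
    eventually_of_mem hW_nhds hcon
  have hinv : HasDerivAt (fun x : ℝ => 1 / x) (-(p.1 ^ 2)⁻¹) p.1 := by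
    simpa only [one_div] using hasDerivAt_inv (hx p hp).ne'
  have hx_eq := hdu.hasDerivAt_deriv_slice_left.two_mul_add_eq_of_sq_add_sq_eventuallyEq
    hdv.hasDerivAt_deriv_slice_left hinv (eventually_nhds_slice_left hcon_nhds)
  have hy_eq := hdu.hasDerivAt_deriv_slice_right.two_mul_add_eq_of_sq_add_sq_eventuallyEq
    hdv.hasDerivAt_deriv_slice_right (hasDerivAt_const p.2 (1 / p.1))
    (eventually_nhds_slice_right hcon_nhds)
  obtain ⟨hux_eq_vy, huy_eq_neg_vx⟩ := hCR p hp
  rw [← hux_eq_vy, huy_eq_neg_vx] at hy_eq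
  have hx0 := (hx p hp).ne'
  obtain ⟨hux, hvx⟩ := eq_mul_div_of_mul_add_mul_eq_of_mul_sub_mul_eq_zero
    (a := deriv (fun x => u (x, p.2)) p.1) (b := deriv (fun x => v (x, p.2)) p.1)
    (r := -(p.1 ^ 2)⁻¹ / 2) (by rw [hcon p hp]; positivity)
    (by linear_combination hx_eq / 2) (by linear_combination hy_eq / 2)
  rw [hcon p hp] at hux hvx
  exact ⟨by rw [hux]; field_simp, by rw [hvx]; field_simp⟩

theorem x_derivatives_from_CR_and_constraint
    (W : Set (ℝ × ℝ)) (u v : ℝ × ℝ → ℝ)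
    (hW : IsOpen W) (hmem : ((1, 0) : ℝ × ℝ) ∈ W)
    (hu : ContDiffOn ℝ 1 u W) (hv : ContDiffOn ℝ 1 v W)
    (hx : ∀ p ∈ W, 0 < p.1)
    (hCR : ∀ p ∈ W,
      deriv (fun x => u (x, p.2)) p.1 = deriv (fun y => v (p.1, y)) p.2 ∧
      deriv (fun y => u (p.1, y)) p.2 = - deriv (fun x => v (x, p.2)) p.1)
    (hcon : ∀ p ∈ W, u p ^ 2 + v p ^ 2 = 1 / p.1) :
    ∀ p ∈ W,
      deriv (fun x => u (x, p.2)) p.1 = - u p / (2 * p.1) ∧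
      deriv (fun x => v (x, p.2)) p.1 = - v p / (2 * p.1) :=
  x_derivatives_from_CR_and_constraint_general W u v hW hu hv hx hCR hcon
end

section
/- If u, v : ℝ² → ℝ are C¹ near (1,0), satisfy the Cauchy–Riemann equations, and u² + v² = 1/x, then the function w = u·√x satisfies both w_x = 0 (w independent of x) and w_yy = −w/(4x²); these two conditions together with w² + (v√x)² = 1 force a contradiction, so no such u, v exist. -/
/-!
Differentiating `u² + v² = 1/x` in `x` and in `y` and substituting the Cauchy–Riemann equations
gives a linear system for the partial derivatives whose determinant is `-4(u² + v²) = -4/x ≠ 0`;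
solving it yields `u_x = -u/(2x)`, `u_y = v/(2x)`, `v_x = -v/(2x)`, `v_y = -u/(2x)`.
Hence `w = u√x` and `z = v√x` do not depend on `x`, while `w_y = z/(2x)` and `z_y = -w/(2x)`.
Comparing these `y`-derivatives on two vertical lines `x = 1` and `x = x₁ ≠ 1` forces
`z = w = 0` at `(1, 0)`, against `w² + z² = 1`.
-/

open Metric Filter Topology

section

variable {𝕜 E F G : Type*} [NontriviallyNormedField 𝕜]
  [NormedAddCommGroup E] [NormedSpace 𝕜 E] [NormedAddCommGroup F] [NormedSpace 𝕜 F]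
  [NormedAddCommGroup G] [NormedSpace 𝕜 G]
  {f : E × F → G} {p : E × F}

theorem DifferentiableAt.comp_prodMk_left (hf : DifferentiableAt 𝕜 f p) :
    DifferentiableAt 𝕜 (fun x => f (x, p.2)) p.1 :=
  hf.comp p.1 (differentiableAt_id.prodMk (differentiableAt_const _))

theorem DifferentiableAt.comp_prodMk_right (hf : DifferentiableAt 𝕜 f p) :
    DifferentiableAt 𝕜 (fun y => f (p.1, y)) p.2 :=
  hf.comp p.2 ((differentiableAt_const _).prodMk differentiableAt_id)

end

section

variable {X Y : Type*} [TopologicalSpace X] [TopologicalSpace Y] {s : Set (X × Y)} {p : X × Y}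

theorem eventually_prodMk_left_mem (hs : s ∈ 𝓝 p) : ∀ᶠ x in 𝓝 p.1, (x, p.2) ∈ s :=
  (continuous_id.prodMk continuous_const).continuousAt.preimage_mem_nhds hs

theorem eventually_prodMk_right_mem (hs : s ∈ 𝓝 p) : ∀ᶠ y in 𝓝 p.2, (p.1, y) ∈ s :=
  (continuous_const.prodMk continuous_id).continuousAt.preimage_mem_nhds hs

end

theorem partials_eq_of_cauchyRiemann_of_sq_add_sq_eq_inv {u v ux uy vx vy x : ℝ} (hx : x ≠ 0)
    (hCR₁ : ux = vy) (hCR₂ : uy = -vx) (hcon : u ^ 2 + v ^ 2 = 1 / x)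
    (hdx : 2 * u * ux + 2 * v * vx = -(x ^ 2)⁻¹) (hdy : 2 * u * uy + 2 * v * vy = 0) :
    ux = -u / (2 * x) ∧ uy = v / (2 * x) ∧ vx = -v / (2 * x) ∧ vy = -u / (2 * x) := by
  subst hCR₁
  obtain rfl : vx = -uy := by linarith
  field_simp at hcon hdx
  have hux : ux = -u / (2 * x) := by
    field_simp
    linear_combination u * hdx + x ^ 2 * v * hdy - 2 * x * ux * hcon
  have huy : uy = v / (2 * x) := by
    field_simp
    linear_combination -v * hdx + x ^ 2 * u * hdy - 2 * x * uy * hcon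
  refine ⟨hux, huy, ?_, hux⟩
  rw [huy, neg_div]

theorem hasDerivAt_mul_sqrt_of_hasDerivAt {φ : ℝ → ℝ} {x : ℝ} (hx : 0 < x)
    (hφ : HasDerivAt φ (-φ x / (2 * x)) x) : HasDerivAt (fun t => φ t * √t) 0 x := by
  refine (hφ.fun_mul (Real.hasDerivAt_sqrt hx.ne')).congr_deriv ?_
  have hs0 : √x ≠ 0 := (Real.sqrt_pos.mpr hx).ne'
  field_simp
  rw [Real.sq_sqrt hx.le]
  ring

theorem hasDerivAt_partials_of_cauchyRiemann {W : Set (ℝ × ℝ)} {u v : ℝ × ℝ → ℝ} {p : ℝ × ℝ}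
    (hW : W ∈ 𝓝 p) (hu : DifferentiableAt ℝ u p) (hv : DifferentiableAt ℝ v p) (hx : p.1 ≠ 0)
    (hCR : deriv (fun x => u (x, p.2)) p.1 = deriv (fun y => v (p.1, y)) p.2 ∧
      deriv (fun y => u (p.1, y)) p.2 = - deriv (fun x => v (x, p.2)) p.1)
    (hcon : ∀ q ∈ W, u q ^ 2 + v q ^ 2 = 1 / q.1) :
    HasDerivAt (fun x => u (x, p.2)) (-u p / (2 * p.1)) p.1 ∧
      HasDerivAt (fun y => u (p.1, y)) (v p / (2 * p.1)) p.2 ∧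
      HasDerivAt (fun x => v (x, p.2)) (-v p / (2 * p.1)) p.1 ∧
      HasDerivAt (fun y => v (p.1, y)) (-u p / (2 * p.1)) p.2 := by
  have hux := hu.comp_prodMk_left.hasDerivAt
  have huy := hu.comp_prodMk_right.hasDerivAt
  have hvx := hv.comp_prodMk_left.hasDerivAt
  have hvy := hv.comp_prodMk_right.hasDerivAt
  have hdx : 2 * u p * deriv (fun x => u (x, p.2)) p.1 +
      2 * v p * deriv (fun x => v (x, p.2)) p.1 = -(p.1 ^ 2)⁻¹ := by
    have hinv : (fun x => u (x, p.2) ^ 2 + v (x, p.2) ^ 2) =ᶠ[𝓝 p.1] fun x => x⁻¹ := by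
      filter_upwards [eventually_prodMk_left_mem hW] with x hxW
      simpa using hcon _ hxW
    have := ((hux.pow 2).add (hvx.pow 2)).unique
      ((hasDerivAt_inv hx).congr_of_eventuallyEq hinv)
    simpa [mul_comm, mul_left_comm] using this
  have hdy : 2 * u p * deriv (fun y => u (p.1, y)) p.2 +
      2 * v p * deriv (fun y => v (p.1, y)) p.2 = 0 := by
    have hconst : (fun y => u (p.1, y) ^ 2 + v (p.1, y) ^ 2) =ᶠ[𝓝 p.2] fun _ => 1 / p.1 := by
      filter_upwards [eventually_prodMk_right_mem hW] with y hyW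
      exact hcon _ hyW
    have := ((huy.pow 2).add (hvy.pow 2)).unique
      ((hasDerivAt_const _ _).congr_of_eventuallyEq hconst)
    simpa [mul_comm, mul_left_comm] using this
  obtain ⟨hux', huy', hvx', hvy'⟩ := partials_eq_of_cauchyRiemann_of_sq_add_sq_eq_inv hx
    hCR.1 hCR.2 (hcon p (mem_of_mem_nhds hW)) hdx hdy
  exact ⟨hux.congr_deriv hux', huy.congr_deriv huy', hvx.congr_deriv hvx', hvy.congr_deriv hvy'⟩

theorem eq_of_hasDerivAt_fst_eq_zero {F : ℝ × ℝ → ℝ} {s t : Set ℝ} (hs : IsOpen s)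
    (hs' : IsPreconnected s) (hF : ∀ p ∈ s ×ˢ t, HasDerivAt (fun x => F (x, p.2)) 0 p.1)
    {x x' y : ℝ} (hx : x ∈ s) (hx' : x' ∈ s) (hy : y ∈ t) : F (x, y) = F (x', y) :=
  hs.is_const_of_deriv_eq_zero (f := fun a => F (a, y)) hs'
    (fun a ha => (hF (a, y) ⟨ha, hy⟩).differentiableAt.differentiableWithinAt)
    (fun a ha => (hF (a, y) ⟨ha, hy⟩).deriv) hx hx'

/-- `f√x` does not depend on `x`, but its `y`-derivative `c (g√x) / (2x)` does unless `g = 0`. -/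
theorem apply_one_zero_eq_zero_of_hasDerivAt {f g : ℝ × ℝ → ℝ} {c r : ℝ} (hc : c ≠ 0)
    (hr : 0 < r)
    (hfx : ∀ p ∈ ball 1 r ×ˢ ball 0 r, HasDerivAt (fun x => f (x, p.2) * √x) 0 p.1)
    (hgx : ∀ p ∈ ball 1 r ×ˢ ball 0 r, HasDerivAt (fun x => g (x, p.2) * √x) 0 p.1)
    (hfy : ∀ p ∈ ball 1 r ×ˢ ball 0 r,
      HasDerivAt (fun y => f (p.1, y)) (c * g p / (2 * p.1)) p.2) :
    g (1, 0) = 0 := by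
  set x₁ : ℝ := 1 + r / 2
  have hx₁ : x₁ ∈ ball 1 r := by
    rw [mem_ball, Real.dist_eq, show x₁ - 1 = r / 2 by ring, abs_of_pos (by positivity)]
    linarith
  have hx₁pos : 0 < x₁ := by positivity
  have hconst : ∀ F : ℝ × ℝ → ℝ, (∀ p ∈ ball 1 r ×ˢ ball 0 r,
      HasDerivAt (fun x => F (x, p.2) * √x) 0 p.1) → ∀ y ∈ ball 0 r, F (x₁, y) * √x₁ = F (1, y) :=
    fun F hF y hy => by
      simpa using eq_of_hasDerivAt_fst_eq_zero (F := fun p => F p * √p.1) isOpen_ball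
        (convex_ball 1 r).isPreconnected hF hx₁ (mem_ball_self hr) hy
  have hslice : (fun y => f (x₁, y) * √x₁) =ᶠ[𝓝 0] fun y => f (1, y) :=
    eventually_of_mem (ball_mem_nhds 0 hr) (hconst f hfx)
  have h₁ := ((hfy (x₁, 0) ⟨hx₁, mem_ball_self hr⟩).mul_const √x₁).congr_of_eventuallyEq
    hslice.symm
  have hderiv : c * g (1, 0) / (2 * x₁) = c * g (1, 0) / 2 := by
    have h := h₁.unique (hfy (1, 0) ⟨mem_ball_self hr, mem_ball_self hr⟩)
    rwa [div_mul_eq_mul_div, mul_assoc, hconst g hgx 0 (mem_ball_self hr), mul_one] at h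
  have : g (1, 0) * (1 - x₁) = 0 := by
    field_simp at hderiv
    linear_combination hderiv
  simpa [show 1 - x₁ ≠ 0 by simp [x₁]; positivity] using this

theorem w_properties_and_contradiction
    (W : Set (ℝ × ℝ)) (u v : ℝ × ℝ → ℝ)
    (hW : IsOpen W) (hmem : ((1, 0) : ℝ × ℝ) ∈ W)
    (hu : ContDiffOn ℝ 1 u W) (hv : ContDiffOn ℝ 1 v W)
    (hx : ∀ p ∈ W, 0 < p.1)
    (hCR : ∀ p ∈ W,
      deriv (fun x => u (x, p.2)) p.1 = deriv (fun y => v (p.1, y)) p.2 ∧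
      deriv (fun y => u (p.1, y)) p.2 = - deriv (fun x => v (x, p.2)) p.1)
    (hcon : ∀ p ∈ W, u p ^ 2 + v p ^ 2 = 1 / p.1) :
    (∀ p ∈ W, deriv (fun x => u (x, p.2) * Real.sqrt x) p.1 = 0) ∧
    (∀ p ∈ W, deriv (deriv (fun y => u (p.1, y) * Real.sqrt p.1)) p.2
      = - (u p * Real.sqrt p.1) / (4 * p.1 ^ 2)) ∧
    (∀ p ∈ W, (u p * Real.sqrt p.1) ^ 2 + (v p * Real.sqrt p.1) ^ 2 = 1) ∧
    False := by
  have hpartials := fun p (hp : p ∈ W) =>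
    hasDerivAt_partials_of_cauchyRiemann (hW.mem_nhds hp)
      ((hu.contDiffAt (hW.mem_nhds hp)).differentiableAt one_ne_zero)
      ((hv.contDiffAt (hW.mem_nhds hp)).differentiableAt one_ne_zero)
      (hx p hp).ne' (hCR p hp) hcon
  obtain ⟨r, hr, hrW⟩ := isOpen_iff.mp hW _ hmem
  rw [← ball_prod_same] at hrW
  have hux p (hp : p ∈ ball 1 r ×ˢ ball 0 r) :=
    hasDerivAt_mul_sqrt_of_hasDerivAt (hx p (hrW hp)) (hpartials p (hrW hp)).1
  have hvx p (hp : p ∈ ball 1 r ×ˢ ball 0 r) :=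
    hasDerivAt_mul_sqrt_of_hasDerivAt (hx p (hrW hp)) (hpartials p (hrW hp)).2.2.1
  have hu0 : u (1, 0) = 0 := apply_one_zero_eq_zero_of_hasDerivAt (c := -1) (by norm_num) hr
    hvx hux fun p hp => (hpartials p (hrW hp)).2.2.2.congr_deriv (by ring)
  have hv0 : v (1, 0) = 0 := apply_one_zero_eq_zero_of_hasDerivAt (c := 1) one_ne_zero hr
    hux hvx fun p hp => (hpartials p (hrW hp)).2.1.congr_deriv (by ring)
  simpa [hu0, hv0] using hcon _ hmem
end

section
/- Let u, v : W → ℝ be C¹ on a connected open subset W of {x > 0} satisfying u_x = −u/(2x), v_x = −v/(2x), u_y = v/(2x), v_y = −u/(2x). If W contains a nondegenerate rectangle I × J with I containing two distinct points, then u ≡ 0 and v ≡ 0 on W. -/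
/-!
The weighted energy `x (u² + v²)`, i.e. `|√x (u + i v)|²`, has zero derivative, so it is constant on
the connected set `W`, and it suffices to find one common zero of `u` and `v`. Along horizontal
lines of the rectangle `√x u` and `√x v` do not depend on `x`. Differentiating `√x u` in `y` gives
`√x v / (2x)`, which is then also independent of `x`; two distinct values of `x` force `√x v = 0`.
The same argument for the solution `(v, -u)` gives `u = 0`.
-/

open Set Filter Topology

section Slices

variable {F : Type*} [NormedAddCommGroup F] [NormedSpace ℝ F] {f : ℝ × ℝ → F}
  {L : ℝ × ℝ →L[ℝ] F} {p : ℝ × ℝ}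

theorem HasFDerivAt.hasDerivAt_prodMk_left (hf : HasFDerivAt f L p) :
    HasDerivAt (fun x => f (x, p.2)) (L (1, 0)) p.1 :=
  hf.comp_hasDerivAt p.1 ((hasDerivAt_id p.1).prodMk (hasDerivAt_const p.1 p.2))

theorem HasFDerivAt.hasDerivAt_prodMk_right (hf : HasFDerivAt f L p) :
    HasDerivAt (fun y => f (p.1, y)) (L (0, 1)) p.2 :=
  hf.comp_hasDerivAt p.2 ((hasDerivAt_const p.2 p.1).prodMk (hasDerivAt_id p.2))

theorem hasFDerivAt_zero_of_hasDerivAt_prodMk (hf : DifferentiableAt ℝ f p)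
    (hx : HasDerivAt (fun x => f (x, p.2)) 0 p.1) (hy : HasDerivAt (fun y => f (p.1, y)) 0 p.2) :
    HasFDerivAt f (0 : ℝ × ℝ →L[ℝ] F) p := by
  suffices fderiv ℝ f p = 0 from this ▸ hf.hasFDerivAt
  ext
  · exact hf.hasFDerivAt.hasDerivAt_prodMk_left.unique hx
  · exact hf.hasFDerivAt.hasDerivAt_prodMk_right.unique hy

end Slices

theorem hasDerivAt_sqrt_mul_eq_zero {g : ℝ → ℝ} {x : ℝ} (hx : 0 < x)
    (hg : HasDerivAt g (-g x / (2 * x)) x) : HasDerivAt (fun t => √t * g t) 0 x := by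
  refine ((Real.hasDerivAt_sqrt hx.ne').mul hg).congr_deriv ?_
  have : √x ≠ 0 := by positivity
  field_simp
  linear_combination (-g x) * Real.sq_sqrt hx.le

theorem sqrt_mul_eq_sqrt_mul_of_hasDerivAt {g : ℝ → ℝ} {s : Set ℝ} (hs : IsOpen s)
    (hs' : IsPreconnected s) (hpos : ∀ x ∈ s, 0 < x)
    (hg : ∀ x ∈ s, HasDerivAt g (-g x / (2 * x)) x) {x₁ x₂ : ℝ} (h₁ : x₁ ∈ s) (h₂ : x₂ ∈ s) :
    √x₁ * g x₁ = √x₂ * g x₂ := by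
  have hd : ∀ x ∈ s, HasDerivAt (fun t => √t * g t) 0 x := fun x hx =>
    hasDerivAt_sqrt_mul_eq_zero (hpos x hx) (hg x hx)
  exact hs.is_const_of_deriv_eq_zero hs'
    (fun x hx => (hd x hx).differentiableAt.differentiableWithinAt) (fun x hx => (hd x hx).deriv)
    h₁ h₂

theorem eq_zero_on_rectangle {f g : ℝ × ℝ → ℝ} {a b c d : ℝ}
    (hpos : ∀ p ∈ Ioo a b ×ˢ Ioo c d, 0 < p.1)
    (hfx : ∀ p ∈ Ioo a b ×ˢ Ioo c d, HasDerivAt (fun x => f (x, p.2)) (-f p / (2 * p.1)) p.1)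
    (hgx : ∀ p ∈ Ioo a b ×ˢ Ioo c d, HasDerivAt (fun x => g (x, p.2)) (-g p / (2 * p.1)) p.1)
    (hfy : ∀ p ∈ Ioo a b ×ˢ Ioo c d, HasDerivAt (fun y => f (p.1, y)) (g p / (2 * p.1)) p.2) :
    ∀ p ∈ Ioo a b ×ˢ Ioo c d, g p = 0 := by
  rintro ⟨x₁, y⟩ ⟨hx₁, hy⟩
  obtain ⟨x₂, hx₂, hne⟩ := (Ioo_infinite (hx₁.1.trans hx₁.2)).nontrivial.exists_ne x₁
  have hpos₁ : 0 < x₁ := hpos (x₁, y) ⟨hx₁, hy⟩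
  have hpos₂ : 0 < x₂ := hpos (x₂, y) ⟨hx₂, hy⟩
  have hindep : ∀ h : ℝ × ℝ → ℝ,
      (∀ p ∈ Ioo a b ×ˢ Ioo c d, HasDerivAt (fun x => h (x, p.2)) (-h p / (2 * p.1)) p.1) →
      ∀ y' ∈ Ioo c d, √x₁ * h (x₁, y') = √x₂ * h (x₂, y') := fun h hh y' hy' =>
    sqrt_mul_eq_sqrt_mul_of_hasDerivAt (g := fun x => h (x, y')) isOpen_Ioo isPreconnected_Ioo
      (fun x hx => hpos (x, y') ⟨hx, hy'⟩) (fun x hx => hh (x, y') ⟨hx, hy'⟩) hx₁ hx₂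
  have hf_eq : (fun y => √x₁ * f (x₁, y)) =ᶠ[𝓝 y] (fun y => √x₂ * f (x₂, y)) :=
    eventually_of_mem (isOpen_Ioo.mem_nhds hy) (hindep f hfx)
  have hderiv : √x₁ * (g (x₁, y) / (2 * x₁)) = √x₂ * (g (x₂, y) / (2 * x₂)) :=
    ((hfy (x₁, y) ⟨hx₁, hy⟩).const_mul _).unique
      (((hfy (x₂, y) ⟨hx₂, hy⟩).const_mul _).congr_of_eventuallyEq hf_eq)
  have hg_eq := hindep g hgx y hy
  have : √x₁ * g (x₁, y) * (x₂ - x₁) = 0 := by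
    field_simp at hderiv
    linear_combination hderiv - x₁ * hg_eq
  have hsqrt : √x₁ ≠ 0 := (Real.sqrt_pos.mpr hpos₁).ne'
  have hsub : x₂ - x₁ ≠ 0 := sub_ne_zero.mpr hne
  simpa [hsqrt, hsub] using this

def weightedEnergy (u v : ℝ × ℝ → ℝ) (q : ℝ × ℝ) : ℝ := q.1 * (u q ^ 2 + v q ^ 2)

theorem weightedEnergy_eq_zero_iff {u v : ℝ × ℝ → ℝ} {p : ℝ × ℝ} (hp : 0 < p.1) :
    weightedEnergy u v p = 0 ↔ u p = 0 ∧ v p = 0 := by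
  simp [weightedEnergy, hp.ne', sq, mul_self_add_mul_self_eq_zero]

theorem hasFDerivAt_weightedEnergy_zero {u v : ℝ × ℝ → ℝ} {p : ℝ × ℝ} (hp : p.1 ≠ 0)
    (hu : DifferentiableAt ℝ u p) (hv : DifferentiableAt ℝ v p)
    (hux : HasDerivAt (fun x => u (x, p.2)) (-u p / (2 * p.1)) p.1)
    (hvx : HasDerivAt (fun x => v (x, p.2)) (-v p / (2 * p.1)) p.1)
    (huy : HasDerivAt (fun y => u (p.1, y)) (v p / (2 * p.1)) p.2)
    (hvy : HasDerivAt (fun y => v (p.1, y)) (-u p / (2 * p.1)) p.2) :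
    HasFDerivAt (weightedEnergy u v) (0 : ℝ × ℝ →L[ℝ] ℝ) p := by
  obtain ⟨x, y⟩ := p
  refine hasFDerivAt_zero_of_hasDerivAt_prodMk (by unfold weightedEnergy; fun_prop) ?_ ?_
  · refine ((hasDerivAt_id x).mul ((hux.pow 2).add (hvx.pow 2))).congr_deriv ?_
    simp only [Pi.add_apply, Pi.pow_apply, id_eq]
    field_simp
    ring
  · refine (((huy.pow 2).add (hvy.pow 2)).const_mul x).congr_deriv ?_
    field_simp
    ring

theorem forall_eq_zero_of_eq_zero_at {W : Set (ℝ × ℝ)} {u v : ℝ × ℝ → ℝ} (hW : IsOpen W)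
    (hW' : IsPreconnected W) (hxpos : ∀ p ∈ W, 0 < p.1)
    (hu : DifferentiableOn ℝ u W) (hv : DifferentiableOn ℝ v W)
    (hux : ∀ p ∈ W, HasDerivAt (fun x => u (x, p.2)) (-u p / (2 * p.1)) p.1)
    (hvx : ∀ p ∈ W, HasDerivAt (fun x => v (x, p.2)) (-v p / (2 * p.1)) p.1)
    (huy : ∀ p ∈ W, HasDerivAt (fun y => u (p.1, y)) (v p / (2 * p.1)) p.2)
    (hvy : ∀ p ∈ W, HasDerivAt (fun y => v (p.1, y)) (-u p / (2 * p.1)) p.2)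
    {p₀ : ℝ × ℝ} (hp₀ : p₀ ∈ W) (hu₀ : u p₀ = 0) (hv₀ : v p₀ = 0) :
    ∀ p ∈ W, u p = 0 ∧ v p = 0 := by
  have hE : ∀ p ∈ W, HasFDerivAt (weightedEnergy u v) (0 : ℝ × ℝ →L[ℝ] ℝ) p := fun p hp =>
    hasFDerivAt_weightedEnergy_zero (hxpos p hp).ne' (hu.differentiableAt (hW.mem_nhds hp))
      (hv.differentiableAt (hW.mem_nhds hp)) (hux p hp) (hvx p hp) (huy p hp) (hvy p hp)
  intro p hp
  rw [← weightedEnergy_eq_zero_iff (hxpos p hp), hW.is_const_of_fderiv_eq_zero hW'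
    (fun q hq => (hE q hq).differentiableAt.differentiableWithinAt) (fun q hq => (hE q hq).fderiv)
    hp hp₀]
  exact (weightedEnergy_eq_zero_iff (hxpos p₀ hp₀)).mpr ⟨hu₀, hv₀⟩

theorem first_order_system_forces_zero
    (W : Set (ℝ × ℝ)) (u v : ℝ × ℝ → ℝ)
    (hW : IsOpen W) (hWconn : IsConnected W)
    (hxpos : ∀ p ∈ W, 0 < p.1)
    (hu : ContDiffOn ℝ 1 u W) (hv : ContDiffOn ℝ 1 v W)
    (hux : ∀ p ∈ W, deriv (fun x => u (x, p.2)) p.1 = - u p / (2 * p.1))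
    (hvx : ∀ p ∈ W, deriv (fun x => v (x, p.2)) p.1 = - v p / (2 * p.1))
    (huy : ∀ p ∈ W, deriv (fun y => u (p.1, y)) p.2 = v p / (2 * p.1))
    (hvy : ∀ p ∈ W, deriv (fun y => v (p.1, y)) p.2 = - u p / (2 * p.1))
    (hrect : ∃ a b c d : ℝ, a < b ∧ c < d ∧ Set.Ioo a b ×ˢ Set.Ioo c d ⊆ W) :
    ∀ p ∈ W, u p = 0 ∧ v p = 0 := by
  obtain ⟨a, b, c, d, hab, hcd, hR⟩ := hrect
  have hud := hu.differentiableOn one_ne_zero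
  have hvd := hv.differentiableOn one_ne_zero
  have hdu : ∀ p ∈ W, HasFDerivAt u (fderiv ℝ u p) p := fun p hp =>
    (hud.differentiableAt (hW.mem_nhds hp)).hasFDerivAt
  have hdv : ∀ p ∈ W, HasFDerivAt v (fderiv ℝ v p) p := fun p hp =>
    (hvd.differentiableAt (hW.mem_nhds hp)).hasFDerivAt
  have hux' : ∀ p ∈ W, HasDerivAt (fun x => u (x, p.2)) (-u p / (2 * p.1)) p.1 := fun p hp =>
    hux p hp ▸ (hdu p hp).hasDerivAt_prodMk_left.differentiableAt.hasDerivAt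
  have hvx' : ∀ p ∈ W, HasDerivAt (fun x => v (x, p.2)) (-v p / (2 * p.1)) p.1 := fun p hp =>
    hvx p hp ▸ (hdv p hp).hasDerivAt_prodMk_left.differentiableAt.hasDerivAt
  have huy' : ∀ p ∈ W, HasDerivAt (fun y => u (p.1, y)) (v p / (2 * p.1)) p.2 := fun p hp =>
    huy p hp ▸ (hdu p hp).hasDerivAt_prodMk_right.differentiableAt.hasDerivAt
  have hvy' : ∀ p ∈ W, HasDerivAt (fun y => v (p.1, y)) (-u p / (2 * p.1)) p.2 := fun p hp =>
    hvy p hp ▸ (hdv p hp).hasDerivAt_prodMk_right.differentiableAt.hasDerivAt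
  have hp₀ : ((a + b) / 2, (c + d) / 2) ∈ Ioo a b ×ˢ Ioo c d :=
    ⟨⟨by linarith, by linarith⟩, ⟨by linarith, by linarith⟩⟩
  have hv₀ := eq_zero_on_rectangle (fun p hp => hxpos p (hR hp)) (fun p hp => hux' p (hR hp))
    (fun p hp => hvx' p (hR hp)) (fun p hp => huy' p (hR hp)) _ hp₀
  have hu₀ := eq_zero_on_rectangle (g := -u) (fun p hp => hxpos p (hR hp))
    (fun p hp => hvx' p (hR hp)) (fun p hp => (hux' p (hR hp)).neg.congr_deriv (neg_div _ _).symm)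
    (fun p hp => hvy' p (hR hp)) _ hp₀
  exact forall_eq_zero_of_eq_zero_at hW hWconn.isPreconnected hxpos hud hvd hux' hvx' huy' hvy'
    (hR hp₀) (neg_eq_zero.mp hu₀) hv₀
end
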